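/- Fix ξ₀ ∈ S^{d-1}, δ ∈ (0,1], R' > 1. Let W_δ = B_δ(ξ₀) ∩ S^{d-1}. Then for every ξ ∈ C(W_{δ/2}, (4/3)R') and every y ∈ ℝ^d \ C(W_δ, R'), one has |y − ξ| ≥ (δ/4)·|ξ|. -/

import Mathlib

/-!
Normalization `x ↦ x / ‖x‖` satisfies the scale-invariant Lipschitz bound
`‖y‖ · ‖x/‖x‖ - y/‖y‖‖ ≤ 2 ‖x - y‖`. So if `‖y - ξ‖ < (δ/4)‖ξ‖`, then `y` lies within `δ/2` of the
direction of `ξ`, hence within `δ` of `ξ₀`, and `‖y‖ > (3/4)‖ξ‖ > R'`; that is, `y ∈ C(W_δ, R')`.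
-/

namespace NormedSpace

variable {V : Type*} [NormedAddCommGroup V] [NormedSpace ℝ V]

lemma norm_normalize_le_one (x : V) : ‖normalize x‖ ≤ 1 := by
  by_cases hx : x = 0
  · simp [hx]
  · exact (norm_normalize hx).le

lemma norm_mul_norm_normalize_sub_normalize_le (x y : V) :
    ‖y‖ * ‖normalize x - normalize y‖ ≤ 2 * ‖x - y‖ := by
  have hsplit : ‖y‖ • (normalize x - normalize y) = (x - y) - (‖x‖ - ‖y‖) • normalize x := by
    rw [smul_sub, sub_smul, norm_smul_normalize, norm_smul_normalize]
    abel
  calc ‖y‖ * ‖normalize x - normalize y‖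
      = ‖(x - y) - (‖x‖ - ‖y‖) • normalize x‖ := by
        rw [← hsplit, norm_smul, Real.norm_of_nonneg (norm_nonneg y)]
    _ ≤ ‖x - y‖ + |‖x‖ - ‖y‖| * ‖normalize x‖ := by
        rw [← Real.norm_eq_abs, ← norm_smul]
        exact norm_sub_le _ _
    _ ≤ ‖x - y‖ + ‖x - y‖ * 1 := by
        gcongr
        · exact abs_norm_sub_norm_le x y
        · exact norm_normalize_le_one x
    _ = 2 * ‖x - y‖ := by ring

lemma norm_normalize_sub_normalize_lt {x y : V} {ε : ℝ} (h : ‖x - y‖ < ε * ‖y‖) :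
    ‖normalize x - normalize y‖ < 2 * ε := by
  have hy : 0 < ‖y‖ := by
    refine (norm_nonneg y).lt_of_ne' fun hy0 => ?_
    rw [hy0, mul_zero] at h
    exact (norm_nonneg _).not_gt h
  refine lt_of_mul_lt_mul_left ?_ hy.le
  calc ‖y‖ * ‖normalize x - normalize y‖ ≤ 2 * ‖x - y‖ :=
        norm_mul_norm_normalize_sub_normalize_le x y
    _ < ‖y‖ * (2 * ε) := by linarith

end NormedSpace

theorem stmt10_general {d : ℕ} (ξ₀ : EuclideanSpace ℝ (Fin d))
    (δ R' : ℝ) (hδ : δ ∈ Set.Ioc (0 : ℝ) 1)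
    (ξ y : EuclideanSpace ℝ (Fin d))
    -- `ξ ∈ C(W_{δ/2}, (4/3)R')`
    (hξnorm : (4 / 3) * R' < ‖ξ‖) (hξdir : ‖‖ξ‖⁻¹ • ξ - ξ₀‖ < δ / 2)
    -- `y ∉ C(W_δ, R')`
    (hy : ¬(R' < ‖y‖ ∧ y ≠ 0 ∧ ‖‖y‖⁻¹ • y - ξ₀‖ < δ)) :
    δ / 4 * ‖ξ‖ ≤ ‖y - ξ‖ := by
  by_contra! hclose
  have hynorm : 3 / 4 * ‖ξ‖ < ‖y‖ := by
    nlinarith [norm_sub_norm_le ξ y, norm_sub_rev ξ y, hδ.2, norm_nonneg ξ]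
  have hdir : ‖NormedSpace.normalize y - NormedSpace.normalize ξ‖ < 2 * (δ / 4) :=
    NormedSpace.norm_normalize_sub_normalize_lt hclose
  have htri := norm_sub_le_norm_sub_add_norm_sub
    (NormedSpace.normalize y) (NormedSpace.normalize ξ) ξ₀
  refine hy ⟨by linarith, norm_pos_iff.mp (by linarith [norm_nonneg ξ]), ?_⟩
  unfold NormedSpace.normalize at hdir htri
  linarith

theorem stmt10 {d : ℕ} (ξ₀ : EuclideanSpace ℝ (Fin d))
    (hξ₀ : ξ₀ ∈ Metric.sphere (0 : EuclideanSpace ℝ (Fin d)) 1)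
    (δ R' : ℝ) (hδ : δ ∈ Set.Ioc (0 : ℝ) 1) (hR' : 1 < R')
    (ξ y : EuclideanSpace ℝ (Fin d))
    -- `ξ ∈ C(W_{δ/2}, (4/3)R')`
    (hξnorm : (4 / 3) * R' < ‖ξ‖) (hξdir : ‖‖ξ‖⁻¹ • ξ - ξ₀‖ < δ / 2)
    -- `y ∉ C(W_δ, R')`
    (hy : ¬(R' < ‖y‖ ∧ y ≠ 0 ∧ ‖‖y‖⁻¹ • y - ξ₀‖ < δ)) :
    δ / 4 * ‖ξ‖ ≤ ‖y - ξ‖ :=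
  stmt10_general ξ₀ δ R' hδ ξ y hξnorm hξdir hy
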